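/- For every positive integer n, the following identity of rational functions in q holds: ∑_{k=1}^{n} ( (1 + q^k + q^{2k}) · q^{−C(k,2)} / ((1+q^k)^2 · [k]_q) ) · binom_q(2k, k) = ∑_{k=1}^{n} ( q^{−C(k,2)} / [k]_q ) · binom_q(n+k, k) · binom_q(n, k)^{−1} − ∑_{k=1}^{n} q^k / [2k]_q. -/

import Mathlib

open Polynomial Finset

noncomputable section

/-- The `q`-integer `[n]_q = 1 + q + ⋯ + q^(n-1)`, as a polynomial in `ℚ[q]`. -/
def qIntP (n : ℕ) : Polynomial ℚ := ∑ i ∈ Finset.range n, X ^ i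

/-- The `q`-integer `[n]_q` viewed in the field of rational functions `ℚ(q)`. -/
def qN (n : ℕ) : RatFunc ℚ := algebraMap (Polynomial ℚ) (RatFunc ℚ) (qIntP n)

/-- The `q`-Pochhammer symbol `(q; q)_n = ∏_{j=1}^{n} (1 - q^j)` in `ℚ(q)`. -/
def qqPoch (n : ℕ) : RatFunc ℚ :=
  algebraMap (Polynomial ℚ) (RatFunc ℚ) (∏ j ∈ Finset.range n, (1 - X ^ (j + 1)))

/-- The `q`-Pochhammer symbol `(-q; q)_n = ∏_{j=1}^{n} (1 + q^j)` in `ℚ(q)`. -/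
def nqPoch (n : ℕ) : RatFunc ℚ :=
  algebraMap (Polynomial ℚ) (RatFunc ℚ) (∏ j ∈ Finset.range n, (1 + X ^ (j + 1)))

/-- The Gaussian `q`-binomial coefficient, as a rational function. -/
def qbin (n k : ℕ) : RatFunc ℚ :=
  if k ≤ n then qqPoch n / (qqPoch k * qqPoch (n - k)) else 0

/-- `qCong p r x y` means `x ≡ y (mod [p]_q^r)`: the difference `x - y` can be
written as a fraction whose numerator (a polynomial) is divisible by `[p]_q^r`
and whose denominator is relatively prime to `[p]_q`. -/
def qCong (p r : ℕ) (x y : RatFunc ℚ) : Prop :=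
  ∃ a b : Polynomial ℚ, IsCoprime b (qIntP p) ∧
    (x - y) * algebraMap (Polynomial ℚ) (RatFunc ℚ) b =
      algebraMap (Polynomial ℚ) (RatFunc ℚ) (qIntP p ^ r * a)

/-!
Wilf–Zeilberger method. Let `F(n,k) = q^(-C(k,2)) / [k]_q · (q;q)_(n+k) (q;q)_(n-k) / (q;q)_n²`
be the right-hand summand and `G(n,k) = R(n,k) F(n,k)` with
`R(n,k) = q^(n+1) (1 - q^(n+1-k)) (1 - q^k) / ((1 - q^(n+1))² (1 + q^(n+1)))`.
Then `F(n+1,k) - F(n,k) = G(n,k) - G(n,k+1)` for `1 ≤ k < n`, so from `n` to `n+1` the first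
sum on the right changes by `G(n,1) - G(n,n) + F(n+1,n) - F(n,n) + F(n+1,n+1)`. Here
`G(n,1) = q^(n+1) / [2n+2]_q` is the new term of the last sum, and the remaining boundary terms
add up to the new left-hand summand `(1 + q^(n+1) + q^(2n+2)) / (1 + q^(n+1))² · F(n+1,n+1)`.
Divided by `F(n,k)`, each of these is an identity of rational functions in `q`, `q^k`, `q^(n-k)`.
-/

local notation "q" => (RatFunc.X : RatFunc ℚ)

lemma one_sub_q_pow_ne_zero {m : ℕ} (hm : m ≠ 0) : 1 - q ^ m ≠ 0 := by
  have h := RatFunc.algebraMap_ne_zero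
    (neg_ne_zero.mpr (X_pow_sub_C_ne_zero (Nat.pos_of_ne_zero hm) (1 : ℚ)))
  simpa [RatFunc.algebraMap_X] using h

lemma one_add_q_pow_ne_zero (m : ℕ) : 1 + q ^ m ≠ 0 := by
  rcases eq_or_ne m 0 with rfl | hm
  · norm_num
  have h := RatFunc.algebraMap_ne_zero (X_pow_sub_C_ne_zero (Nat.pos_of_ne_zero hm) (-1 : ℚ))
  simpa [RatFunc.algebraMap_X, add_comm] using h

lemma one_sub_q_ne_zero : 1 - q ≠ 0 := by simpa using one_sub_q_pow_ne_zero one_ne_zero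

lemma qN_eq (k : ℕ) : qN k = (1 - q ^ k) / (1 - q) := by
  have h : q ≠ 1 := fun h => one_sub_q_ne_zero (by rw [h, sub_self])
  simp only [qN, qIntP, map_sum, map_pow, RatFunc.algebraMap_X]
  rw [geom_sum_eq h, ← neg_div_neg_eq, neg_sub, neg_sub]

lemma qqPoch_zero : qqPoch 0 = 1 := by simp [qqPoch]

lemma qqPoch_succ (n : ℕ) : qqPoch (n + 1) = qqPoch n * (1 - q ^ (n + 1)) := by
  simp [qqPoch, Finset.prod_range_succ, RatFunc.algebraMap_X]

lemma qqPoch_ne_zero (n : ℕ) : qqPoch n ≠ 0 := by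
  induction n with
  | zero => simp [qqPoch_zero]
  | succ m ih =>
    rw [qqPoch_succ]
    exact mul_ne_zero ih (one_sub_q_pow_ne_zero (Nat.add_one_ne_zero m))

lemma qbin_of_le {n k : ℕ} (h : k ≤ n) : qbin n k = qqPoch n / (qqPoch k * qqPoch (n - k)) :=
  if_pos h

lemma q_zpow_neg_choose_two_succ (k : ℕ) :
    q ^ (-((k + 1).choose 2 : ℤ)) = q ^ (-(k.choose 2 : ℤ)) / q ^ k := by
  rw [Nat.choose_succ_succ', Nat.choose_one_right, ← zpow_natCast,
    ← zpow_sub₀ RatFunc.X_ne_zero]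
  push_cast
  congr 1
  ring

def wzF (n k : ℕ) : RatFunc ℚ :=
  q ^ (-(k.choose 2 : ℤ)) / qN k * (qqPoch (n + k) * qqPoch (n - k) / qqPoch n ^ 2)

def wzG (n k : ℕ) : RatFunc ℚ :=
  wzF n k * (q ^ (n + 1) * (1 - q ^ (n + 1 - k)) * (1 - q ^ k) /
    ((1 - q ^ (n + 1)) ^ 2 * (1 + q ^ (n + 1))))

lemma wzF_succ_left {n k : ℕ} (h : k ≤ n) :
    wzF (n + 1) k =
      wzF n k * ((1 - q ^ (n + k + 1)) * (1 - q ^ (n - k + 1)) / (1 - q ^ (n + 1)) ^ 2) := by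
  rw [wzF, wzF, add_right_comm, qqPoch_succ (n + k), Nat.sub_add_comm h, qqPoch_succ (n - k),
    qqPoch_succ n]
  field_simp

lemma wzF_succ_right {n k : ℕ} (hk : k ≠ 0) (h : k < n) :
    wzF n (k + 1) = wzF n k * ((1 - q ^ k) * (1 - q ^ (n + k + 1)) /
      (q ^ k * (1 - q ^ (k + 1)) * (1 - q ^ (n - k)))) := by
  obtain ⟨m, rfl⟩ := Nat.exists_eq_add_of_lt h
  have h1 := one_sub_q_pow_ne_zero hk
  have h2 := one_sub_q_pow_ne_zero (Nat.add_one_ne_zero m)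
  rw [wzF, wzF, q_zpow_neg_choose_two_succ, qN_eq, qN_eq,
    show k + m + 1 + (k + 1) = k + m + 1 + k + 1 by ring, qqPoch_succ (k + m + 1 + k),
    show k + m + 1 - (k + 1) = m by omega, show k + m + 1 - k = m + 1 by omega, qqPoch_succ m]
  field_simp

lemma wzF_succ_sub_wzF_eq {n k : ℕ} (hk : k ≠ 0) (h : k < n) :
    wzF (n + 1) k - wzF n k = wzG n k - wzG n (k + 1) := by
  rw [wzG, wzG, wzF_succ_left h.le, wzF_succ_right hk h]
  obtain ⟨m, rfl⟩ := Nat.exists_eq_add_of_lt h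
  rw [show k + m + 1 - k = m + 1 by omega, show k + m + 1 + 1 - k = m + 1 + 1 by omega,
    show k + m + 1 + 1 - (k + 1) = m + 1 by omega]
  have h1 := one_sub_q_pow_ne_zero (Nat.add_one_ne_zero k)
  have h2 := one_sub_q_pow_ne_zero (Nat.add_one_ne_zero m)
  have h3 := one_sub_q_pow_ne_zero (Nat.add_one_ne_zero (k + m + 1))
  have h4 := one_add_q_pow_ne_zero (k + m + 1 + 1)
  have hq : q ^ k ≠ 0 := pow_ne_zero k RatFunc.X_ne_zero
  field_simp
  ring

lemma wzG_one {n : ℕ} (hn : n ≠ 0) : wzG n 1 = q ^ (n + 1) / qN (2 * (n + 1)) := by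
  obtain ⟨m, rfl⟩ := Nat.exists_eq_add_one_of_ne_zero hn
  have h1 := one_sub_q_pow_ne_zero (Nat.add_one_ne_zero m)
  have h2 := one_sub_q_pow_ne_zero (Nat.add_one_ne_zero (m + 1))
  have h3 := one_add_q_pow_ne_zero (m + 1 + 1)
  have h4 : 1 - q ^ (2 * (m + 1 + 1)) ≠ 0 := one_sub_q_pow_ne_zero (by omega)
  have hP := qqPoch_ne_zero m
  rw [wzG, wzF, qN_eq, qN_eq, Nat.choose_eq_zero_of_lt one_lt_two, Nat.add_sub_cancel,
    Nat.add_sub_cancel, qqPoch_succ (m + 1), qqPoch_succ m]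
  simp only [Nat.cast_zero, neg_zero, zpow_zero, pow_one]
  field_simp
  ring

lemma wz_boundary {n : ℕ} (hn : n ≠ 0) :
    (1 + q ^ (n + 1) + q ^ (2 * (n + 1))) / (1 + q ^ (n + 1)) ^ 2 * wzF (n + 1) (n + 1)
      = wzF (n + 1) (n + 1) + (wzF (n + 1) n - wzF n n) - wzG n n := by
  rw [wzG, wzF_succ_right hn (Nat.lt_add_one n), wzF_succ_left le_rfl, Nat.sub_self,
    Nat.add_sub_cancel_left, pow_one]
  have h1 := one_sub_q_ne_zero
  have h2 := one_sub_q_pow_ne_zero (Nat.add_one_ne_zero n)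
  have h3 := one_add_q_pow_ne_zero (n + 1)
  have hq : q ^ n ≠ 0 := pow_ne_zero n RatFunc.X_ne_zero
  field_simp
  ring

lemma wz_base : wzF 1 1 - q / qN 2 = (1 + q + q ^ 2) / (1 + q) ^ 2 * wzF 1 1 := by
  rw [wzF, qN_eq, qN_eq, qqPoch_succ 1, qqPoch_succ 0, qqPoch_zero,
    Nat.choose_eq_zero_of_lt one_lt_two]
  simp only [Nat.cast_zero, neg_zero, zpow_zero, pow_one, zero_add, one_add_one_eq_two]
  have h1 : 1 + q ≠ 0 := by simpa using one_add_q_pow_ne_zero 1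
  have h2 : 1 - q ^ 2 ≠ 0 := one_sub_q_pow_ne_zero two_ne_zero
  field_simp
  ring

lemma sum_wzF_succ_sub_sum_wzF {n : ℕ} (hn : 1 ≤ n) :
    ∑ k ∈ Icc 1 n, wzF (n + 1) k - ∑ k ∈ Icc 1 n, wzF n k
      = wzG n 1 - wzG n n + (wzF (n + 1) n - wzF n n) := by
  have htel : ∑ k ∈ Ico 1 n, (wzF (n + 1) k - wzF n k) = wzG n 1 - wzG n n := by
    rw [← neg_sub, ← sum_Ico_sub _ hn, ← sum_neg_distrib]
    refine sum_congr rfl fun k hk => ?_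
    rw [mem_Ico] at hk
    rw [wzF_succ_sub_wzF_eq (by omega) hk.2, neg_sub]
  rw [← sum_sub_distrib, ← Ico_add_one_right_eq_Icc, sum_Ico_succ_top hn, htel]

lemma sum_diag_eq_sum_wzF_sub {n : ℕ} (hn : 1 ≤ n) :
    ∑ k ∈ Icc 1 n, (1 + q ^ k + q ^ (2 * k)) / (1 + q ^ k) ^ 2 * wzF k k
      = ∑ k ∈ Icc 1 n, wzF n k - ∑ k ∈ Icc 1 n, q ^ k / qN (2 * k) := by
  induction n, hn using Nat.le_induction with
  | base => simpa using wz_base.symm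
  | succ n hn ih =>
    simp only [sum_Icc_succ_top (show 1 ≤ n + 1 by omega)]
    rw [ih]
    linear_combination (sum_wzF_succ_sub_sum_wzF hn).symm - wzG_one (by omega : n ≠ 0)
      + wz_boundary (by omega : n ≠ 0)

lemma lhs_summand_eq_mul_wzF (k : ℕ) :
    (1 + q ^ k + q ^ (2 * k)) * q ^ (-(k.choose 2 : ℤ)) / ((1 + q ^ k) ^ 2 * qN k) *
        qbin (2 * k) k = (1 + q ^ k + q ^ (2 * k)) / (1 + q ^ k) ^ 2 * wzF k k := by
  rw [wzF, qbin_of_le (by omega), two_mul, Nat.add_sub_cancel, Nat.sub_self, qqPoch_zero]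
  field_simp

lemma rhs_summand_eq_wzF {n k : ℕ} (h : k ≤ n) :
    q ^ (-(k.choose 2 : ℤ)) / qN k * qbin (n + k) k * (qbin n k)⁻¹ = wzF n k := by
  rw [wzF, qbin_of_le (by omega), qbin_of_le h, Nat.add_sub_cancel]
  have h1 := qqPoch_ne_zero k
  have h2 := qqPoch_ne_zero (n - k)
  field_simp

/-- For every positive integer `n`, the identity of rational functions:
`∑_{k=1}^{n} ((1+q^k+q^{2k}) q^{−C(k,2)}/((1+q^k)² [k]_q)) binom_q(2k,k)
  = ∑_{k=1}^{n} (q^{−C(k,2)}/[k]_q) binom_q(n+k,k) binom_q(n,k)⁻¹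
    − ∑_{k=1}^{n} q^k/[2k]_q`. -/
theorem qid3 (n : ℕ) (hn : 0 < n) :
    ∑ k ∈ Finset.Icc 1 n,
        (1 + RatFunc.X ^ k + RatFunc.X ^ (2 * k)) *
          (RatFunc.X : RatFunc ℚ) ^ (-(k.choose 2 : ℤ)) /
            ((1 + RatFunc.X ^ k) ^ 2 * qN k) * qbin (2 * k) k
      = ∑ k ∈ Finset.Icc 1 n,
          (RatFunc.X : RatFunc ℚ) ^ (-(k.choose 2 : ℤ)) / qN k *
            qbin (n + k) k * (qbin n k)⁻¹
        - ∑ k ∈ Finset.Icc 1 n, (RatFunc.X : RatFunc ℚ) ^ k / qN (2 * k) := by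
  rw [sum_congr rfl fun k _ => lhs_summand_eq_mul_wzF k,
    sum_congr rfl fun k hk => rhs_summand_eq_wzF (mem_Icc.mp hk).2]
  exact sum_diag_eq_sum_wzF_sub hn
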